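/- arXiv:1702.07335 — 3 statements merged into one kernel-verified Lean document; each statement's English description precedes it below -/
import Mathlib

section
/- Let n₁, n₂ : ℕ, let P be a symmetric positive definite real matrix of size (n₁+n₂)×(n₁+n₂), let m ∈ ℝ^{n₁+n₂}, and define f : ℝ^{n₁} × ℝ^{n₂} → ℝ by f(x,y) = exp(−(1/2)·((x,y)−m)ᵀ P ((x,y)−m)). Then there exists a constant C > 0, independent of y, such that for every y ∈ ℝ^{n₂}: sup_{x ∈ ℝ^{n₁}} f(x,y) = C · ∫_{ℝ^{n₁}} f(x,y) dx. -/
open Matrix MeasureTheory Real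

/-!
Write `A = P_xx` for the upper-left block of `P`. For fixed `y`, the quadratic form in `x` is
minimised at the point `x₀(y)` where its `x`-gradient, the `x`-block of `P ((x₀,y) - m)`, vanishes;
by symmetry of `P` the cross terms then drop out and the form equals
`(x - x₀)ᵀ A (x - x₀) + c(y)`. Hence `sup_x f(x,y) = exp(-c(y)/2)`, while by translation
invariance `∫ f(x,y) dx = exp(-c(y)/2) · ∫ exp(-xᵀ A x / 2) dx`, and `C` is the reciprocal of this
last integral, which is finite and positive because `A` is positive definite.
-/

open scoped MatrixOrder in
theorem Matrix.PosDef.exists_pos_mul_dotProduct_self_le {ι : Type*} [Fintype ι] [DecidableEq ι]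
    {A : Matrix ι ι ℝ} (hA : A.PosDef) :
    ∃ ε > 0, ∀ x : ι → ℝ, ε * (x ⬝ᵥ x) ≤ x ⬝ᵥ A *ᵥ x := by
  cases isEmpty_or_nonempty ι
  · exact ⟨1, one_pos, fun x => by simp [Subsingleton.elim x 0]⟩
  -- `A ≥ ε • 1` in the Loewner order, for `ε` the least eigenvalue of `A`.
  obtain ⟨ε, hε, hεA⟩ := (CFC.exists_pos_algebraMap_le_iff hA.isHermitian.isSelfAdjoint).2
    fun _ hx => hA.isStrictlyPositive.spectrum_pos hx
  refine ⟨ε, hε, fun x => ?_⟩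
  have hx := (Matrix.le_iff.1 hεA).dotProduct_mulVec_nonneg x
  simpa only [Algebra.algebraMap_eq_smul_one, sub_mulVec, smul_mulVec, one_mulVec, dotProduct_sub,
    dotProduct_smul, smul_eq_mul, sub_nonneg, star_trivial] using hx

section Gaussian

variable {ι : Type*} [Fintype ι]

theorem Matrix.PosDef.integrable_exp_neg_half_dotProduct_mulVec [DecidableEq ι]
    {A : Matrix ι ι ℝ} (hA : A.PosDef) :
    Integrable fun x : ι → ℝ => exp (-(1/2) * (x ⬝ᵥ A *ᵥ x)) := by
  obtain ⟨ε, hε, hεA⟩ := hA.exists_pos_mul_dotProduct_self_le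
  have hprod : Integrable fun x : ι → ℝ => ∏ i, exp (-(ε/2) * x i ^ 2) :=
    Integrable.fintype_prod (f := fun _ v => exp (-(ε/2) * v ^ 2)) fun _ =>
      integrable_exp_neg_mul_sq (by positivity)
  refine hprod.mono (by fun_prop) (ae_of_all _ fun x => ?_)
  rw [norm_of_nonneg (exp_pos _).le, norm_of_nonneg (by positivity), ← exp_sum, exp_le_exp,
    ← Finset.mul_sum]
  have hsq : ∑ i, x i ^ 2 = x ⬝ᵥ x := by simp [dotProduct, sq]
  nlinarith [hεA x]

theorem Matrix.PosDef.integral_exp_neg_half_dotProduct_mulVec_pos [DecidableEq ι]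
    {A : Matrix ι ι ℝ} (hA : A.PosDef) :
    0 < ∫ x : ι → ℝ, exp (-(1/2) * (x ⬝ᵥ A *ᵥ x)) := by
  rw [integral_pos_iff_support_of_nonneg (fun _ => (exp_pos _).le)
    hA.integrable_exp_neg_half_dotProduct_mulVec]
  simp [Function.support, (exp_pos _).ne', NeZero.ne]

theorem Matrix.PosSemidef.iSup_exp_neg_half_dotProduct_mulVec_sub_add {A : Matrix ι ι ℝ}
    (hA : A.PosSemidef) (x₀ : ι → ℝ) (c : ℝ) :
    ⨆ x : ι → ℝ, exp (-(1/2) * ((x - x₀) ⬝ᵥ A *ᵥ (x - x₀) + c)) = exp (-(1/2) * c) := by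
  refine ciSup_eq_of_forall_le_of_forall_lt_exists_gt (fun x => ?_)
    fun _ hw => ⟨x₀, by simpa using hw⟩
  have hx := hA.dotProduct_mulVec_nonneg (x - x₀)
  rw [star_trivial] at hx
  rw [exp_le_exp]
  linarith

theorem integral_exp_neg_half_dotProduct_mulVec_sub_add (A : Matrix ι ι ℝ) (x₀ : ι → ℝ) (c : ℝ) :
    ∫ x : ι → ℝ, exp (-(1/2) * ((x - x₀) ⬝ᵥ A *ᵥ (x - x₀) + c)) =
      exp (-(1/2) * c) * ∫ x : ι → ℝ, exp (-(1/2) * (x ⬝ᵥ A *ᵥ x)) := by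
  simp_rw [mul_add, exp_add]
  rw [integral_mul_const, integral_sub_right_eq_self (fun x => exp (-(1/2) * (x ⬝ᵥ A *ᵥ x))),
    mul_comm]

end Gaussian

theorem Matrix.PosDef.toBlocks₁₁ {ι κ R : Type*} [Ring R] [PartialOrder R] [StarRing R]
    {P : Matrix (ι ⊕ κ) (ι ⊕ κ) R} (hP : P.PosDef) : P.toBlocks₁₁.PosDef :=
  hP.submatrix Sum.inl_injective

theorem Matrix.IsSymm.add_dotProduct_mulVec_add {n R : Type*} [Fintype n] [CommSemiring R]
    {P : Matrix n n R} (hP : P.IsSymm) {z w : n → R} (h : w ⬝ᵥ P *ᵥ z = 0) :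
    (z + w) ⬝ᵥ P *ᵥ (z + w) = z ⬝ᵥ P *ᵥ z + w ⬝ᵥ P *ᵥ w := by
  have hswap : z ⬝ᵥ P *ᵥ w = w ⬝ᵥ P *ᵥ z := by
    rw [dotProduct_mulVec, ← mulVec_transpose, hP.eq, dotProduct_comm]
  rw [mulVec_add, add_dotProduct, dotProduct_add, dotProduct_add, hswap, h]
  ring

section Blocks

variable {ι κ R : Type*} [Fintype ι] [Fintype κ]

theorem sumElim_zero_dotProduct_mulVec_sumElim_zero [CommSemiring R]
    (P : Matrix (ι ⊕ κ) (ι ⊕ κ) R) (u : ι → R) :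
    Sum.elim u 0 ⬝ᵥ P *ᵥ Sum.elim u 0 = u ⬝ᵥ P.toBlocks₁₁ *ᵥ u := by
  rw [← P.fromBlocks_toBlocks, fromBlocks_mulVec]
  simp [sumElim_dotProduct_sumElim]

theorem sumElim_zero_dotProduct_eq_zero [CommSemiring R] (u : ι → R) {v : ι ⊕ κ → R}
    (hv : v ∘ Sum.inl = 0) : Sum.elim u 0 ⬝ᵥ v = 0 := by
  rw [← Sum.elim_comp_inl_inr v, sumElim_dotProduct_sumElim, hv]
  simp

theorem exists_mulVec_sumElim_sub_comp_inl_eq_zero [CommRing R] [DecidableEq ι]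
    {P : Matrix (ι ⊕ κ) (ι ⊕ κ) R} (hA : IsUnit P.toBlocks₁₁) (m : ι ⊕ κ → R) (y : κ → R) :
    ∃ x₀ : ι → R, (P *ᵥ (Sum.elim x₀ y - m)) ∘ Sum.inl = 0 := by
  obtain ⟨x₀, hx₀⟩ := mulVec_surjective_iff_isUnit.2 hA
    (-((P *ᵥ (Sum.elim (0 : ι → R) y - m)) ∘ Sum.inl))
  refine ⟨x₀, funext fun i => ?_⟩
  have hx₀i := congrFun hx₀ i
  simp only [mulVec, dotProduct, toBlocks₁₁, of_apply, Pi.neg_apply, Function.comp_apply,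
    Pi.sub_apply, mul_sub, Finset.sum_sub_distrib, Fintype.sum_sum_type, Sum.elim_inl,
    Pi.zero_apply, mul_zero, Finset.sum_const_zero, Sum.elim_inr, zero_add, neg_sub] at hx₀i ⊢
  linear_combination hx₀i

theorem Matrix.PosDef.exists_dotProduct_mulVec_sumElim_sub_eq [DecidableEq ι]
    {P : Matrix (ι ⊕ κ) (ι ⊕ κ) ℝ} (hP : P.PosDef) (m : ι ⊕ κ → ℝ) (y : κ → ℝ) :
    ∃ (x₀ : ι → ℝ) (c : ℝ), ∀ x, (Sum.elim x y - m) ⬝ᵥ P *ᵥ (Sum.elim x y - m) =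
      (x - x₀) ⬝ᵥ P.toBlocks₁₁ *ᵥ (x - x₀) + c := by
  obtain ⟨x₀, hx₀⟩ := exists_mulVec_sumElim_sub_comp_inl_eq_zero hP.toBlocks₁₁.isUnit m y
  refine ⟨x₀, (Sum.elim x₀ y - m) ⬝ᵥ P *ᵥ (Sum.elim x₀ y - m), fun x => ?_⟩
  have hsplit : Sum.elim x y - m = (Sum.elim x₀ y - m) + Sum.elim (x - x₀) 0 := by
    ext (i | j) <;> simp
  have hsymm : P.IsSymm := hP.isHermitian
  rw [hsplit, hsymm.add_dotProduct_mulVec_add (sumElim_zero_dotProduct_eq_zero _ hx₀),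
    sumElim_zero_dotProduct_mulVec_sumElim_zero, add_comm]

end Blocks

/-- **Duality lemma (Lemma 1).** For an unnormalized Gaussian
`f(x,y) = exp(-(1/2) ((x,y)-m)ᵀ P ((x,y)-m))` with symmetric positive definite precision `P`,
there is a constant `C > 0`, independent of `y`, such that for every `y`,
`sup_x f(x,y) = C * ∫ x, f(x,y)`. -/
theorem gaussian_max_eq_const_mul_integral (n₁ n₂ : ℕ)
    (P : Matrix (Fin n₁ ⊕ Fin n₂) (Fin n₁ ⊕ Fin n₂) ℝ) (hP : P.PosDef)
    (m : Fin n₁ ⊕ Fin n₂ → ℝ) :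
    ∃ C : ℝ, 0 < C ∧ ∀ y : Fin n₂ → ℝ,
      (⨆ x : Fin n₁ → ℝ,
          Real.exp (-(1/2) * ((Sum.elim x y - m) ⬝ᵥ P *ᵥ (Sum.elim x y - m)))) =
        C * ∫ x : Fin n₁ → ℝ,
          Real.exp (-(1/2) * ((Sum.elim x y - m) ⬝ᵥ P *ᵥ (Sum.elim x y - m))) := by
  have hI := hP.toBlocks₁₁.integral_exp_neg_half_dotProduct_mulVec_pos
  refine ⟨_, inv_pos.2 hI, fun y => ?_⟩
  obtain ⟨x₀, c, hx₀⟩ := hP.exists_dotProduct_mulVec_sumElim_sub_eq m y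
  simp_rw [hx₀]
  rw [hP.toBlocks₁₁.posSemidef.iSup_exp_neg_half_dotProduct_mulVec_sub_add,
    integral_exp_neg_half_dotProduct_mulVec_sub_add, mul_comm (exp _), inv_mul_cancel_left₀ hI.ne']
end

section
/- Let n₁, n₂ : ℕ, let P be a symmetric positive definite real matrix of size (n₁+n₂)×(n₁+n₂) written in block form P = [[A, B],[Bᵀ, D]] with A of size n₁×n₁, let m ∈ ℝ^{n₁+n₂}, and define f : ℝ^{n₁} × ℝ^{n₂} → ℝ by f(x,y) = exp(−(1/2)·((x,y)−m)ᵀ P ((x,y)−m)). Then for every y ∈ ℝ^{n₂}: sup_{x ∈ ℝ^{n₁}} f(x,y) = (2π)^{−n₁/2} · (det A)^{1/2} · ∫_{ℝ^{n₁}} f(x,y) dx. (In particular the constant C in the duality lemma equals (2π)^{−n₁/2}(det A)^{1/2}, where A is the x-block of the precision matrix.) -/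
open Matrix MeasureTheory Real

/-!
Completing the square with the Schur complement writes the exponent as
`(x - x₀)ᵀ A (x - x₀) + c` with `c` independent of `x`, so `x ↦ f (x, y)` is `exp (-c / 2)` times a
centred Gaussian of precision `A` translated to `x₀`. That Gaussian has supremum `1` (attained at
`x₀`) and integral `(2π)^(n₁/2) / √(det A)`: factor `A = Sᵀ S` and substitute `v = S u`.
-/

namespace Matrix
variable {ι : Type*} [Fintype ι]

theorem integral_comp_mulVec [DecidableEq ι] {E : Type*} [NormedAddCommGroup E]
    [NormedSpace ℝ E] {M : Matrix ι ι ℝ} (hM : M.det ≠ 0) (g : (ι → ℝ) → E) :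
    ∫ u, g (M *ᵥ u) = |M.det|⁻¹ • ∫ v, g v := by
  let L := (M.toLinearEquiv' (M.invertibleOfIsUnitDet hM.isUnit)).toContinuousLinearEquiv
  have hL : (L : (ι → ℝ) → ι → ℝ) = toLin' M := rfl
  have hmap : Measure.map L volume = ENNReal.ofReal |M.det⁻¹| • (volume : Measure (ι → ℝ)) := by
    rw [hL, Measure.map_linearMap_addHaar_eq_smul_addHaar _ (by rwa [LinearMap.det_toLin']),
      LinearMap.det_toLin']
  calc ∫ u, g (M *ᵥ u) = ∫ u, g (L u) := rfl
    _ = ∫ v, g v ∂(Measure.map L volume) :=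
      (L.toHomeomorph.measurableEmbedding.integral_map g).symm
    _ = |M.det|⁻¹ • ∫ v, g v := by
      rw [hmap, integral_smul_measure, ENNReal.toReal_ofReal (abs_nonneg _), abs_inv]

theorem integral_exp_neg_half_dotProduct_self :
    ∫ v : ι → ℝ, exp (-(1 / 2) * (v ⬝ᵥ v)) = √(2 * π) ^ Fintype.card ι := by
  have hprod : ∀ v : ι → ℝ, exp (-(1 / 2) * (v ⬝ᵥ v)) = ∏ i, exp (-(1 / 2) * v i ^ 2) := by
    intro v
    rw [← exp_sum, dotProduct, Finset.mul_sum]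
    simp only [sq]
  simp_rw [hprod]
  rw [integral_fintype_prod_volume_eq_pow (fun t : ℝ => exp (-(1 / 2) * t ^ 2)),
    integral_gaussian]
  congr 2
  ring

open scoped MatrixOrder in
theorem PosDef.integral_exp_neg_half_dotProduct_mulVec [DecidableEq ι]
    {A : Matrix ι ι ℝ} (hA : A.PosDef) :
    ∫ u, exp (-(1 / 2) * (u ⬝ᵥ A *ᵥ u)) = √(2 * π) ^ Fintype.card ι / √A.det := by
  obtain ⟨S, rfl⟩ := CStarAlgebra.nonneg_iff_eq_star_mul_self.mp hA.posSemidef.nonneg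
  have hSt : star S = Sᵀ := conjTranspose_eq_transpose_of_trivial S
  have hquad (u : ι → ℝ) : u ⬝ᵥ (star S * S) *ᵥ u = (S *ᵥ u) ⬝ᵥ (S *ᵥ u) := by
    rw [← mulVec_mulVec, dotProduct_mulVec, hSt, vecMul_transpose]
  have hdet : (star S * S).det = S.det ^ 2 := by rw [det_mul, hSt, det_transpose, sq]
  have hS : S.det ≠ 0 := fun h => by simpa [hdet, h] using hA.det_pos
  simp_rw [hquad]
  rw [integral_comp_mulVec hS (fun v => exp (-(1 / 2) * (v ⬝ᵥ v))),
    integral_exp_neg_half_dotProduct_self, hdet, sqrt_sq_eq_abs, smul_eq_mul, inv_mul_eq_div]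

theorem PosSemidef.iSup_exp_neg_half_dotProduct_mulVec_sub {A : Matrix ι ι ℝ} (hA : A.PosSemidef)
    (x₀ : ι → ℝ) : ⨆ x, exp (-(1 / 2) * ((x - x₀) ⬝ᵥ A *ᵥ (x - x₀))) = 1 := by
  refine ciSup_eq_of_forall_le_of_forall_lt_exists_gt (fun x => ?_) fun _ _ => ⟨x₀, by simpa⟩
  have hnonneg := hA.dotProduct_mulVec_nonneg (x - x₀)
  simp only [star_trivial] at hnonneg
  exact exp_le_one_iff.mpr (by linarith)

variable {κ : Type*} [Fintype κ]

theorem sumElim_dotProduct_fromBlocks_mulVec_sumElim [DecidableEq ι] {A : Matrix ι ι ℝ}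
    (B : Matrix ι κ ℝ) (D : Matrix κ κ ℝ) [Invertible A] (hA : A.IsHermitian)
    (x : ι → ℝ) (v : κ → ℝ) :
    Sum.elim x v ⬝ᵥ fromBlocks A B Bᵀ D *ᵥ Sum.elim x v =
      (x + (A⁻¹ * B) *ᵥ v) ⬝ᵥ A *ᵥ (x + (A⁻¹ * B) *ᵥ v) + v ⬝ᵥ (D - Bᵀ * A⁻¹ * B) *ᵥ v := by
  simpa [dotProduct_mulVec] using schur_complement_eq₁₁ B D x v hA

end Matrix

theorem Real.rpow_neg_div_two_mul_sqrt_pow {a : ℝ} (ha : 0 < a) (n : ℕ) :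
    a ^ (-(n : ℝ) / 2) * √a ^ n = 1 := by
  rw [sqrt_eq_rpow, ← rpow_natCast, ← rpow_mul ha.le, ← rpow_add ha]
  ring_nf
  exact rpow_zero a

/-- The constant in the duality lemma: for a Gaussian with precision
`P = [[A, B], [Bᵀ, D]]`, for every `y`,
`sup_x f(x,y) = (2π)^{-n₁/2} (det A)^{1/2} ∫ x, f(x,y)`. -/
theorem gaussian_max_eq_const_mul_integral_explicit (n₁ n₂ : ℕ)
    (A : Matrix (Fin n₁) (Fin n₁) ℝ) (B : Matrix (Fin n₁) (Fin n₂) ℝ)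
    (D : Matrix (Fin n₂) (Fin n₂) ℝ)
    (hP : (Matrix.fromBlocks A B Bᵀ D).PosDef)
    (m : Fin n₁ ⊕ Fin n₂ → ℝ) (y : Fin n₂ → ℝ) :
    (⨆ x : Fin n₁ → ℝ,
        Real.exp (-(1/2) * ((Sum.elim x y - m) ⬝ᵥ (Matrix.fromBlocks A B Bᵀ D) *ᵥ
          (Sum.elim x y - m)))) =
      (2 * Real.pi) ^ (-(n₁ : ℝ) / 2) * Real.sqrt A.det *
        ∫ x : Fin n₁ → ℝ,
          Real.exp (-(1/2) * ((Sum.elim x y - m) ⬝ᵥ (Matrix.fromBlocks A B Bᵀ D) *ᵥ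
            (Sum.elim x y - m))) := by
  have hA : A.PosDef := hP.submatrix Sum.inl_injective
  have : Invertible A := hA.isUnit.invertible
  set v : Fin n₂ → ℝ := y - m ∘ Sum.inr
  set x₀ : Fin n₁ → ℝ := m ∘ Sum.inl - (A⁻¹ * B) *ᵥ v
  set c := v ⬝ᵥ (D - Bᵀ * A⁻¹ * B) *ᵥ v
  have hquad (x : Fin n₁ → ℝ) : (Sum.elim x y - m) ⬝ᵥ fromBlocks A B Bᵀ D *ᵥ (Sum.elim x y - m) =
      (x - x₀) ⬝ᵥ A *ᵥ (x - x₀) + c := by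
    have hsplit : Sum.elim x y - m = Sum.elim (x - m ∘ Sum.inl) v := by ext (i | j) <;> rfl
    rw [hsplit, sumElim_dotProduct_fromBlocks_mulVec_sumElim B D hA.isHermitian,
      sub_sub_eq_add_sub, add_sub_right_comm]
  simp_rw [hquad, mul_add, exp_add]
  rw [← Real.iSup_mul_of_nonneg (exp_pos _).le, integral_mul_const,
    hA.posSemidef.iSup_exp_neg_half_dotProduct_mulVec_sub,
    integral_sub_right_eq_self (fun u => exp (-(1 / 2) * (u ⬝ᵥ A *ᵥ u))),
    hA.integral_exp_neg_half_dotProduct_mulVec, Fintype.card_fin]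
  have hdet : √A.det ≠ 0 := (sqrt_pos.mpr hA.det_pos).ne'
  calc 1 * exp (-(1 / 2) * c)
      = (2 * π) ^ (-(n₁ : ℝ) / 2) * √(2 * π) ^ n₁ * (√A.det / √A.det) * exp (-(1 / 2) * c) := by
        rw [rpow_neg_div_two_mul_sqrt_pow two_pi_pos, div_self hdet, mul_one]
    _ = _ := by ring
end

section
/- Let n₁, n₂ : ℕ, let P be a symmetric positive definite real matrix of size (n₁+n₂)×(n₁+n₂), let m = (m₁, m₂) ∈ ℝ^{n₁} × ℝ^{n₂}, and define f(x,y) = exp(−(1/2)·((x,y)−m)ᵀ P ((x,y)−m)). Then the function x ↦ ∫_{ℝ^{n₂}} f(x,y) dy and the function x ↦ sup_{y ∈ ℝ^{n₂}} f(x,y) each attain their supremum at a unique point of ℝ^{n₁}, and these two maximizers coincide and equal m₁ (the first block of the mean). In other words, for Gaussians the mode of the marginal coincides with the max-marginal maximizer. -/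
/-!
Complete the square in `y`: writing `P` in blocks `A, B; Bᴴ, D`, the Schur complement
`S = A - B D⁻¹ Bᴴ` satisfies
`(u, w)ᵀ P (u, w) = (D⁻¹ Bᴴ u + w)ᵀ D (D⁻¹ Bᴴ u + w) + uᵀ S u`,
and `S` is positive definite along with `P`. Hence `f(x, y)` is `exp(-½ (x - m₁)ᵀ S (x - m₁))`
times a centred `D`-Gaussian in a translate of `y`. Integrating in `y` multiplies by the
positive constant `∫ exp(-½ wᵀ D w) dw`, taking the supremum in `y` multiplies by `1`, so both
marginals are positive multiples of `exp(-½ (x - m₁)ᵀ S (x - m₁))`, which peaks exactly at `m₁`.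
-/

open Matrix MeasureTheory Real

namespace Matrix

section Gaussian

variable {ι : Type*} [Fintype ι]

noncomputable def unnormalizedGaussian (D : Matrix ι ι ℝ) (w : ι → ℝ) : ℝ :=
  exp (-(1 / 2) * (w ⬝ᵥ D *ᵥ w))

theorem unnormalizedGaussian_pos (D : Matrix ι ι ℝ) (w : ι → ℝ) :
    0 < unnormalizedGaussian D w :=
  exp_pos _

@[simp]
theorem unnormalizedGaussian_zero (D : Matrix ι ι ℝ) : unnormalizedGaussian D 0 = 1 := by
  simp [unnormalizedGaussian]

variable {D : Matrix ι ι ℝ}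

theorem PosDef.exists_pos_mul_dotProduct_self_le_s6 (hD : D.PosDef) :
    ∃ c > 0, ∀ w : ι → ℝ, c * (w ⬝ᵥ w) ≤ w ⬝ᵥ D *ᵥ w := by
  cases isEmpty_or_nonempty ι
  · exact ⟨1, one_pos, fun w => by simp [Subsingleton.elim w 0]⟩
  let q : EuclideanSpace ℝ ι → ℝ := fun v => v.ofLp ⬝ᵥ D *ᵥ v.ofLp
  have hq : Continuous q := by
    simp only [q, dotProduct, mulVec]
    fun_prop
  -- `q` is homogeneous of degree two, so its minimum on the unit sphere is the constant.
  obtain ⟨v₀, hv₀, hmin⟩ := (isCompact_sphere (0 : EuclideanSpace ℝ ι) 1).exists_isMinOn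
    (NormedSpace.sphere_nonempty.mpr zero_le_one) hq.continuousOn
  have hv₀ : v₀.ofLp ≠ 0 := by
    rintro h
    simp [show v₀ = 0 from WithLp.ofLp_injective 2 h] at hv₀
  refine ⟨q v₀, by simpa using hD.dotProduct_mulVec_pos hv₀, fun w => ?_⟩
  obtain rfl | hw := eq_or_ne w 0
  · simp
  set r := ‖WithLp.toLp 2 w‖
  have hr : 0 < r := norm_pos_iff.mpr (by simpa using hw)
  have hnorm : w ⬝ᵥ w = r ^ 2 := by
    rw [EuclideanSpace.real_norm_sq_eq]
    simp [dotProduct, sq]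
  have hq_smul : q (r⁻¹ • WithLp.toLp 2 w) = (r ^ 2)⁻¹ * (w ⬝ᵥ D *ᵥ w) := by
    simp only [q, WithLp.ofLp_smul, smul_dotProduct, mulVec_smul, dotProduct_smul, smul_eq_mul]
    ring
  have hle : q v₀ ≤ (r ^ 2)⁻¹ * (w ⬝ᵥ D *ᵥ w) :=
    hq_smul ▸ hmin (by simp [norm_smul, r, hr.ne'])
  rw [hnorm, mul_comm]
  exact (le_inv_mul_iff₀ (by positivity)).mp hle

theorem PosDef.integrable_unnormalizedGaussian (hD : D.PosDef) :
    Integrable (unnormalizedGaussian D) := by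
  obtain ⟨c, hc, hbound⟩ := hD.exists_pos_mul_dotProduct_self_le_s6
  have hprod : Integrable fun w : ι → ℝ => ∏ i, exp (-(c / 2) * w i ^ 2) :=
    Integrable.fintype_prod fun _ => integrable_exp_neg_mul_sq (by positivity)
  have hcont : Continuous (unnormalizedGaussian D) := by
    unfold unnormalizedGaussian
    simp only [dotProduct, mulVec]
    fun_prop
  refine hprod.mono' hcont.aestronglyMeasurable (.of_forall fun w => ?_)
  rw [unnormalizedGaussian, norm_of_nonneg (exp_pos _).le, ← exp_sum, exp_le_exp]
  have hsum : ∑ i, -(c / 2) * w i ^ 2 = -(1 / 2) * (c * (w ⬝ᵥ w)) := by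
    simp only [dotProduct, ← sq, Finset.mul_sum]
    ring_nf
  linarith [hbound w]

theorem PosDef.integral_unnormalizedGaussian_pos (hD : D.PosDef) :
    0 < ∫ w, unnormalizedGaussian D w :=
  integral_exp_pos hD.integrable_unnormalizedGaussian

theorem PosSemidef.unnormalizedGaussian_le_one (hD : D.PosSemidef) (w : ι → ℝ) :
    unnormalizedGaussian D w ≤ 1 := by
  have hq := hD.dotProduct_mulVec_nonneg w
  rw [star_trivial] at hq
  rw [unnormalizedGaussian, exp_le_one_iff]
  linarith

theorem PosDef.unnormalizedGaussian_lt_one (hD : D.PosDef) {w : ι → ℝ} (hw : w ≠ 0) :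
    unnormalizedGaussian D w < 1 := by
  have hq := hD.dotProduct_mulVec_pos hw
  rw [star_trivial] at hq
  rw [unnormalizedGaussian, exp_lt_one_iff]
  linarith

theorem PosSemidef.iSup_unnormalizedGaussian_add (hD : D.PosSemidef) (a : ι → ℝ) :
    ⨆ w, unnormalizedGaussian D (a + w) = 1 := by
  refine le_antisymm (ciSup_le fun w => hD.unnormalizedGaussian_le_one _) ?_
  calc (1 : ℝ) = unnormalizedGaussian D (a + -a) := by simp
    _ ≤ ⨆ w, unnormalizedGaussian D (a + w) :=
      le_ciSup (f := fun w => unnormalizedGaussian D (a + w))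
        ⟨1, Set.forall_mem_range.mpr fun w => hD.unnormalizedGaussian_le_one _⟩ (-a)

end Gaussian

section BlockMatrix

variable {m n : Type*}

theorem fromBlocks_toBlocks_of_isHermitian {P : Matrix (m ⊕ n) (m ⊕ n) ℝ} (hP : P.IsHermitian) :
    fromBlocks P.toBlocks₁₁ P.toBlocks₁₂ P.toBlocks₁₂ᴴ P.toBlocks₂₂ = P := by
  rw [← fromBlocks_toBlocks P, isHermitian_fromBlocks_iff] at hP
  rw [hP.2.1]
  exact fromBlocks_toBlocks P

theorem PosDef.toBlocks₂₂ {P : Matrix (m ⊕ n) (m ⊕ n) ℝ} (hP : P.PosDef) :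
    P.toBlocks₂₂.PosDef :=
  hP.submatrix Sum.inr_injective

variable [Fintype m] [Fintype n] [DecidableEq n] {A : Matrix m m ℝ} {B : Matrix m n ℝ} {D : Matrix n n ℝ}

theorem unnormalizedGaussian_fromBlocks [Invertible D] (hD : D.IsHermitian) (u : m → ℝ)
    (w : n → ℝ) :
    unnormalizedGaussian (fromBlocks A B Bᴴ D) (Sum.elim u w) =
      unnormalizedGaussian (A - B * D⁻¹ * Bᴴ) u *
        unnormalizedGaussian D ((D⁻¹ * Bᴴ) *ᵥ u + w) := by
  have hschur := schur_complement_eq₂₂ A B u w hD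
  simp only [star_trivial, ← dotProduct_mulVec] at hschur
  rw [unnormalizedGaussian, hschur, mul_add, exp_add, mul_comm]
  rfl

theorem PosDef.schur_complement₂₂ (hP : (fromBlocks A B Bᴴ D).PosDef) :
    (A - B * D⁻¹ * Bᴴ).PosDef := by
  have hD : D.PosDef := hP.toBlocks₂₂
  have : Invertible D := hD.isUnit.invertible
  refine posDef_iff_dotProduct_mulVec.mpr ⟨(IsHermitian.fromBlocks₂₂ A B hD.1).mp hP.1, ?_⟩
  intro u hu
  -- Evaluate the block form at `(u, -D⁻¹Bᴴu)`, where its `D`-part vanishes.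
  have hne : Sum.elim u (-((D⁻¹ * Bᴴ) *ᵥ u)) ≠ 0 := fun h =>
    hu (funext fun i => by simpa using congrFun h (Sum.inl i))
  have hpos := hP.dotProduct_mulVec_pos hne
  rw [dotProduct_mulVec, schur_complement_eq₂₂ A B _ _ hD.1] at hpos
  simpa [dotProduct_mulVec] using hpos

theorem PosDef.integral_unnormalizedGaussian_fromBlocks (hP : (fromBlocks A B Bᴴ D).PosDef)
    (u : m → ℝ) :
    ∫ w, unnormalizedGaussian (fromBlocks A B Bᴴ D) (Sum.elim u w) =
      unnormalizedGaussian (A - B * D⁻¹ * Bᴴ) u * ∫ w, unnormalizedGaussian D w := by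
  have hD : D.PosDef := hP.toBlocks₂₂
  have : Invertible D := hD.isUnit.invertible
  simp_rw [unnormalizedGaussian_fromBlocks hD.1, integral_const_mul, integral_add_left_eq_self]

theorem PosDef.iSup_unnormalizedGaussian_fromBlocks (hP : (fromBlocks A B Bᴴ D).PosDef)
    (u : m → ℝ) :
    ⨆ w, unnormalizedGaussian (fromBlocks A B Bᴴ D) (Sum.elim u w) =
      unnormalizedGaussian (A - B * D⁻¹ * Bᴴ) u := by
  have hD : D.PosDef := hP.toBlocks₂₂
  have : Invertible D := hD.isUnit.invertible
  simp_rw [unnormalizedGaussian_fromBlocks hD.1]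
  rw [← mul_iSup_of_nonneg (unnormalizedGaussian_pos _ _).le,
    hD.posSemidef.iSup_unnormalizedGaussian_add, mul_one]

end BlockMatrix

end Matrix

/-- For a Gaussian `f(x,y) = exp(-(1/2)((x,y)-(m₁,m₂))ᵀ P ((x,y)-(m₁,m₂)))` with symmetric
positive definite `P`, both the marginal `x ↦ ∫ y, f(x,y)` and the max-marginal
`x ↦ ⨆ y, f(x,y)` attain their supremum at the unique point `m₁`. -/
theorem gaussian_marginal_mode_eq_max_marginal_mode (n₁ n₂ : ℕ)
    (P : Matrix (Fin n₁ ⊕ Fin n₂) (Fin n₁ ⊕ Fin n₂) ℝ) (hP : P.PosDef)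
    (m₁ : Fin n₁ → ℝ) (m₂ : Fin n₂ → ℝ) :
    let f : (Fin n₁ → ℝ) → (Fin n₂ → ℝ) → ℝ := fun x y =>
      Real.exp (-(1/2) * ((Sum.elim x y - Sum.elim m₁ m₂) ⬝ᵥ P *ᵥ
        (Sum.elim x y - Sum.elim m₁ m₂)))
    (∀ x : Fin n₁ → ℝ, x ≠ m₁ → (∫ y : Fin n₂ → ℝ, f x y) < ∫ y : Fin n₂ → ℝ, f m₁ y) ∧
    (∀ x : Fin n₁ → ℝ, x ≠ m₁ → (⨆ y : Fin n₂ → ℝ, f x y) < ⨆ y : Fin n₂ → ℝ, f m₁ y) := by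
  intro f
  obtain ⟨A, B, D, rfl⟩ : ∃ A B D, P = fromBlocks A B Bᴴ D :=
    ⟨_, _, _, (fromBlocks_toBlocks_of_isHermitian hP.1).symm⟩
  have hf : ∀ x y, f x y =
      unnormalizedGaussian (fromBlocks A B Bᴴ D) (Sum.elim (x - m₁) (y - m₂)) := by
    intro x y
    have hcenter : Sum.elim x y - Sum.elim m₁ m₂ = Sum.elim (x - m₁) (y - m₂) := by
      ext (i | i) <;> rfl
    simp only [f, unnormalizedGaussian, hcenter]
  have hmarginal : ∀ x, ∫ y, f x y =
      unnormalizedGaussian (A - B * D⁻¹ * Bᴴ) (x - m₁) * ∫ w, unnormalizedGaussian D w := by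
    intro x
    simp_rw [hf]
    rw [integral_sub_right_eq_self (fun w => unnormalizedGaussian _ (Sum.elim (x - m₁) w)),
      hP.integral_unnormalizedGaussian_fromBlocks]
  have hmax_marginal : ∀ x, ⨆ y, f x y = unnormalizedGaussian (A - B * D⁻¹ * Bᴴ) (x - m₁) := by
    intro x
    simp_rw [hf]
    exact ((Equiv.subRight m₂).iSup_comp
      (g := fun w => unnormalizedGaussian _ (Sum.elim (x - m₁) w))).trans
      (hP.iSup_unnormalizedGaussian_fromBlocks _)
  have hschur_lt : ∀ x, x ≠ m₁ → unnormalizedGaussian (A - B * D⁻¹ * Bᴴ) (x - m₁) < 1 :=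
    fun x hx => hP.schur_complement₂₂.unnormalizedGaussian_lt_one (sub_ne_zero.mpr hx)
  refine ⟨fun x hx => ?_, fun x hx => ?_⟩
  · rw [hmarginal, hmarginal, sub_self, unnormalizedGaussian_zero, one_mul]
    exact mul_lt_of_lt_one_left hP.toBlocks₂₂.integral_unnormalizedGaussian_pos (hschur_lt x hx)
  · rw [hmax_marginal, hmax_marginal, sub_self, unnormalizedGaussian_zero]
    exact hschur_lt x hx
end
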